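/- Up to isomorphism, there are exactly two connected simple graphs with 7 vertices and 10 edges that have K₃,₃ as a minor: the graph E obtained from K₃,₃ by subdividing one edge once, and the graph E′ obtained from K₃,₃ by attaching one pendant vertex (a new vertex joined by a single edge to a vertex of K₃,₃). -/

import Mathlib

/-!
Six disjoint nonempty branch sets in seven vertices are either six singletons, leaving one spare
vertex, or five singletons and one pair `{c, c'}`, which must be an edge. In the first case the
spare vertex is a leaf attached to the copy of `K₃,₃`, so `E′` is a subgraph. In the second, each
of the three `K₃,₃`-neighbours of the pair is joined to `c` or to `c'`, so one of them, say `c`,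
misses at most one neighbour; then `c'` is a leaf (`E′`) or subdivides the missed edge (`E`).
An injective homomorphism between graphs with the same numbers of vertices and edges is an
isomorphism, and `E ≇ E′` because only `E′` has a vertex of degree one.
-/

def IsMinor {W V : Type} (H : SimpleGraph W) (G : SimpleGraph V) : Prop :=
  ∃ B : W → Set V,
    (∀ w, (B w).Nonempty) ∧
    (∀ w, (G.induce (B w)).Connected) ∧
    (∀ w₁ w₂, w₁ ≠ w₂ → Disjoint (B w₁) (B w₂)) ∧
    (∀ w₁ w₂, H.Adj w₁ w₂ → ∃ u ∈ B w₁, ∃ x ∈ B w₂, G.Adj u x)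

def K33 : SimpleGraph (Fin 3 ⊕ Fin 3) := completeBipartiteGraph (Fin 3) (Fin 3)

def subdivide {V : Type} (G : SimpleGraph V) (u w : V) : SimpleGraph (V ⊕ Unit) :=
  SimpleGraph.fromEdgeSet
    ((Sym2.map Sum.inl '' (G.edgeSet \ {s(u, w)})) ∪
      {s(Sum.inl u, Sum.inr ()), s(Sum.inr (), Sum.inl w)})

def Egraph : SimpleGraph ((Fin 3 ⊕ Fin 3) ⊕ Unit) :=
  subdivide K33 (Sum.inl 0) (Sum.inr 0)

def E'graph : SimpleGraph ((Fin 3 ⊕ Fin 3) ⊕ Unit) :=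
  SimpleGraph.fromEdgeSet
    ((Sym2.map Sum.inl '' K33.edgeSet) ∪ {s(Sum.inl (Sum.inl 0), Sum.inr ())})

open SimpleGraph Function

theorem SimpleGraph.Hom.nonempty_iso_of_injective {W V : Type*} [Finite V] {H : SimpleGraph W}
    {G : SimpleGraph V} (f : H →g G) (hf : Injective f) (hV : Nat.card V ≤ Nat.card W)
    (hE : G.edgeSet.ncard ≤ H.edgeSet.ncard) : Nonempty (H ≃g G) := by
  have hedges : Sym2.map f '' H.edgeSet = G.edgeSet := by
    refine Set.eq_of_subset_of_ncard_le ?_ ?_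
    · rintro _ ⟨e, he, rfl⟩
      exact f.map_mem_edgeSet he
    · rwa [Set.ncard_image_of_injective _ (Sym2.map.injective hf)]
  refine ⟨⟨Equiv.ofBijective f (hf.bijective_of_nat_card_le hV),
    fun {a b} => ⟨fun h => ?_, f.map_adj⟩⟩⟩
  obtain ⟨e, he, hfe⟩ : s(f a, f b) ∈ Sym2.map f '' H.edgeSet := hedges ▸ h
  rwa [Sym2.map.injective hf (hfe.trans (Sym2.map_mk f a b).symm)] at he

theorem SimpleGraph.adj_of_connected_induce_pair {V : Type*} {G : SimpleGraph V} {a b : V}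
    (hab : a ≠ b) (h : (G.induce {a, b}).Connected) : G.Adj a b := by
  have : Nontrivial ({a, b} : Set V) := ⟨⟨a, by simp⟩, ⟨b, by simp⟩, by simpa using hab⟩
  obtain ⟨⟨c, rfl | rfl⟩, hac⟩ := h.preconnected.exists_adj_of_nontrivial ⟨a, by simp⟩
  · exact absurd hac (G.induce _).irrefl
  · exact hac

theorem Set.subsingleton_or_subsingleton_of_ncard_le_three {α : Type*} [Finite α] {s : Set α}
    (hs : s.ncard ≤ 3) {P Q : α → Prop} (h : ∀ a ∈ s, P a ∨ Q a) :
    {a ∈ s | ¬P a}.Subsingleton ∨ {a ∈ s | ¬Q a}.Subsingleton := by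
  have hdisj : Disjoint {a ∈ s | ¬P a} {a ∈ s | ¬Q a} :=
    Set.disjoint_left.mpr fun a ⟨has, hP⟩ ⟨_, hQ⟩ => (h a has).elim hP hQ
  have hsum := (Set.ncard_union_eq hdisj).symm.trans_le
    (Set.ncard_le_ncard (Set.union_subset (fun _ ha => ha.1) (fun _ ha => ha.1)))
  simp only [← Set.ncard_le_one_iff_subsingleton]
  omega

theorem Fintype.forall_eq_one_or_exists_eq_two_of_sum_le {ι : Type*} [Fintype ι] {f : ι → ℕ}
    (hpos : ∀ i, 1 ≤ f i) (hsum : ∑ i, f i ≤ Fintype.card ι + 1) :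
    (∀ i, f i = 1) ∨ ∃ i, f i = 2 ∧ ∀ j ≠ i, f j = 1 := by
  have hexcess : ∑ i, (f i - 1) ≤ 1 := by
    have : ∑ i, (f i - 1 + 1) = ∑ i, f i :=
      Finset.sum_congr rfl fun i _ => Nat.sub_add_cancel (hpos i)
    rw [Finset.sum_add_distrib, Finset.sum_const, smul_eq_mul, mul_one, Finset.card_univ] at this
    omega
  by_cases hall : ∀ i, f i = 1
  · exact .inl hall
  obtain ⟨i, hi⟩ := not_forall.mp hall
  have hfi := hpos i
  have hexcess_i : f i - 1 ≤ ∑ k, (f k - 1) :=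
    Finset.single_le_sum (f := fun k => f k - 1) (fun k _ => Nat.zero_le _) (Finset.mem_univ i)
  refine .inr ⟨i, by omega, fun j hj => ?_⟩
  have hexcess_ij : f i - 1 + (f j - 1) ≤ ∑ k, (f k - 1) :=
    Finset.add_le_sum (f := fun k => f k - 1) (fun k _ => Nat.zero_le _) (Finset.mem_univ i)
      (Finset.mem_univ j) hj.symm
  have hfj := hpos j
  omega

-- `E'graph` is `attachPendant K33 (.inl 0)` by definition.
def attachPendant {W : Type} (K : SimpleGraph W) (v : W) : SimpleGraph (W ⊕ Unit) :=
  SimpleGraph.fromEdgeSet ((Sym2.map Sum.inl '' K.edgeSet) ∪ {s(Sum.inl v, Sum.inr ())})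

section Extensions

variable {W V : Type} (K : SimpleGraph W) {G : SimpleGraph V} {u v w a b : W}

@[simp] theorem attachPendant_adj_inl_inl :
    (attachPendant K v).Adj (.inl a) (.inl b) ↔ K.Adj a b := by
  rw [attachPendant, fromEdgeSet_adj, ← Sym2.map_mk, Set.mem_union,
    (Sym2.map.injective Sum.inl_injective).mem_set_image]
  simpa using fun h => h.ne

@[simp] theorem attachPendant_adj_inl_inr :
    (attachPendant K v).Adj (.inl a) (.inr ()) ↔ a = v := by
  simp [attachPendant, Sym2.exists]

@[simp] theorem attachPendant_adj_inr_inl :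
    (attachPendant K v).Adj (.inr ()) (.inl a) ↔ a = v := by
  rw [adj_comm, attachPendant_adj_inl_inr]

@[simp] theorem subdivide_adj_inl_inl :
    (subdivide K u w).Adj (.inl a) (.inl b) ↔ K.Adj a b ∧ s(a, b) ≠ s(u, w) := by
  rw [subdivide, fromEdgeSet_adj, ← Sym2.map_mk, Set.mem_union,
    (Sym2.map.injective Sum.inl_injective).mem_set_image]
  simp only [Set.mem_sdiff, mem_edgeSet, Set.mem_singleton_iff, Set.mem_insert_iff, Sym2.map_mk,
    Sym2.eq_iff, reduceCtorEq, false_and, and_false, or_false, Sum.inl.injEq, or_self, ne_eq]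
  exact and_iff_left_of_imp fun h => h.1.ne

@[simp] theorem subdivide_adj_inl_inr :
    (subdivide K u w).Adj (.inl a) (.inr ()) ↔ a = u ∨ a = w := by
  simp [subdivide, Sym2.exists]

@[simp] theorem subdivide_adj_inr_inl :
    (subdivide K u w).Adj (.inr ()) (.inl a) ↔ a = u ∨ a = w := by
  rw [adj_comm, subdivide_adj_inl_inr]

instance [DecidableEq W] [DecidableRel K.Adj] : DecidableRel (attachPendant K v).Adj
  | .inl _, .inl _ => decidable_of_iff' _ (attachPendant_adj_inl_inl K)
  | .inl _, .inr () => decidable_of_iff' _ (attachPendant_adj_inl_inr K)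
  | .inr (), .inl _ => decidable_of_iff' _ (attachPendant_adj_inr_inl K)
  | .inr (), .inr () => .isFalse (attachPendant K v).irrefl

instance [DecidableEq W] [DecidableRel K.Adj] : DecidableRel (subdivide K u w).Adj
  | .inl _, .inl _ => decidable_of_iff' _ (subdivide_adj_inl_inl K)
  | .inl _, .inr () => decidable_of_iff' _ (subdivide_adj_inl_inr K)
  | .inr (), .inl _ => decidable_of_iff' _ (subdivide_adj_inr_inl K)
  | .inr (), .inr () => .isFalse (subdivide K u w).irrefl

variable {K}

theorem exists_injective_hom_attachPendant (σ : K →g G) (hσ : Injective σ) {x : V}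
    (hx : x ∉ Set.range σ) (hvx : G.Adj (σ v) x) :
    ∃ f : attachPendant K v →g G, Injective f := by
  refine ⟨⟨Sum.elim σ fun _ => x, ?_⟩,
    hσ.sumElim (injective_of_subsingleton _) fun a _ h => hx ⟨a, h⟩⟩
  rintro (a | ⟨⟩) (b | ⟨⟩) h
  · exact σ.map_adj ((attachPendant_adj_inl_inl K).mp h)
  · obtain rfl := (attachPendant_adj_inl_inr K).mp h
    exact hvx
  · obtain rfl := (attachPendant_adj_inr_inl K).mp h
    exact hvx.symm
  · exact absurd h (attachPendant K v).irrefl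

theorem exists_injective_hom_subdivide {σ : W → V} (hσ : Injective σ)
    (hadj : ∀ a b, K.Adj a b → s(a, b) ≠ s(u, w) → G.Adj (σ a) (σ b)) {x : V}
    (hx : x ∉ Set.range σ) (hux : G.Adj (σ u) x) (hxw : G.Adj x (σ w)) :
    ∃ f : subdivide K u w →g G, Injective f := by
  refine ⟨⟨Sum.elim σ fun _ => x, ?_⟩,
    hσ.sumElim (injective_of_subsingleton _) fun a _ h => hx ⟨a, h⟩⟩
  rintro (a | ⟨⟩) (b | ⟨⟩) h
  · exact hadj a b ((subdivide_adj_inl_inl K).mp h).1 ((subdivide_adj_inl_inl K).mp h).2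
  · obtain rfl | rfl := (subdivide_adj_inl_inr K).mp h
    exacts [hux, hxw.symm]
  · obtain rfl | rfl := (subdivide_adj_inr_inl K).mp h
    exacts [hux.symm, hxw]
  · exact absurd h (subdivide K u w).irrefl

end Extensions

section Minors

variable {W V : Type} {H : SimpleGraph W} {G : SimpleGraph V} {B : W → Set V}

theorem IsMinor.of_injective_hom (f : H →g G) (hf : Injective f) : IsMinor H G :=
  ⟨fun w => {f w}, fun _ => Set.singleton_nonempty _, fun _ => Connected.of_subsingleton,
    fun _ _ h => Set.disjoint_singleton.mpr (hf.ne h),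
    fun _ _ h => ⟨_, rfl, _, rfl, f.map_adj h⟩⟩

theorem isMinor_attachPendant (K : SimpleGraph W) (v : W) : IsMinor K (attachPendant K v) :=
  .of_injective_hom ⟨Sum.inl, (attachPendant_adj_inl_inl K).mpr⟩ Sum.inl_injective

theorem isMinor_subdivide (K : SimpleGraph W) (u w : W) : IsMinor K (subdivide K u w) := by
  classical
  let B : W → Set (W ⊕ Unit) := fun p => if p = u then {.inl u, .inr ()} else {.inl p}
  have hinl : ∀ p, .inl p ∈ B p := fun p => by by_cases hp : p = u <;> simp [B, hp]
  have hinr : .inr () ∈ B u := by simp [B]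
  refine ⟨B, fun p => ⟨_, hinl p⟩, fun p => ?_, fun p q hpq => ?_, fun p q hpq => ?_⟩
  · by_cases hp : p = u
    · rw [show B p = {.inl u, .inr ()} from if_pos hp]
      exact induce_pair_connected_of_adj (by simp)
    · rw [show B p = {.inl p} from if_neg hp]
      exact Connected.of_subsingleton
  · rw [Set.disjoint_left]
    by_cases hp : p = u <;> by_cases hq : q = u <;> simp_all [B]
  · by_cases he : s(p, q) = s(u, w)
    · rcases Sym2.eq_iff.mp he with ⟨rfl, rfl⟩ | ⟨rfl, rfl⟩
      · exact ⟨_, hinr, _, hinl _, by simp⟩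
      · exact ⟨_, hinl _, _, hinr, by simp⟩
    · exact ⟨_, hinl p, _, hinl q, (subdivide_adj_inl_inl K).mpr ⟨hpq, he⟩⟩

theorem eq_of_mem_of_pairwise_disjoint (hdisj : Pairwise (Disjoint on B)) {p q : W} {v : V}
    (hp : v ∈ B p) (hq : v ∈ B q) : p = q := by
  by_contra hpq
  exact Set.disjoint_left.mp (hdisj hpq) hp hq

theorem injective_of_mem_of_pairwise_disjoint (hdisj : Pairwise (Disjoint on B)) {σ : W → V}
    (hσ : ∀ w, σ w ∈ B w) : Injective σ :=
  fun p q h => eq_of_mem_of_pairwise_disjoint hdisj (hσ p) (h ▸ hσ q)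

theorem adj_of_branchSets_eq_singleton
    (hadj : ∀ w₁ w₂, H.Adj w₁ w₂ → ∃ u ∈ B w₁, ∃ x ∈ B w₂, G.Adj u x)
    {p q : W} {a b : V} (h : H.Adj p q) (hp : B p = {a}) (hq : B q = {b}) : G.Adj a b := by
  obtain ⟨a', ha', b', hb', hab⟩ := hadj p q h
  rw [hp, Set.mem_singleton_iff] at ha'
  rw [hq, Set.mem_singleton_iff] at hb'
  exact ha' ▸ hb' ▸ hab

theorem sum_ncard_le_of_pairwise_disjoint [Fintype W] [Finite V]
    (hdisj : Pairwise (Disjoint on B)) : ∑ w, (B w).ncard ≤ Nat.card V := by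
  rw [← finsum_eq_sum_of_fintype, ← Set.ncard_iUnion_of_finite (fun _ => Set.toFinite _) hdisj]
  exact Set.ncard_le_card _

end Minors

instance : DecidableRel K33.Adj := fun _ _ => inferInstanceAs (Decidable (_ ∨ _))

instance : DecidableRel Egraph.Adj := inferInstanceAs (DecidableRel (subdivide K33 _ _).Adj)

instance : DecidableRel E'graph.Adj := inferInstanceAs (DecidableRel (attachPendant K33 _).Adj)

theorem K33.exists_iso_apply_inl_inr {a b : Fin 3 ⊕ Fin 3} (h : K33.Adj a b) :
    ∃ ρ : K33 ≃g K33, ρ (.inl 0) = a ∧ ρ (.inr 0) = b := by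
  rcases a with i | j <;> rcases b with i' | j' <;> simp [K33] at h
  · exact ⟨⟨Equiv.sumCongr (Equiv.swap 0 i) (Equiv.swap 0 j'), by
      rintro (_ | _) (_ | _) <;> simp [K33]⟩, by simp, by simp⟩
  · exact ⟨⟨(Equiv.sumCongr (Equiv.swap 0 j) (Equiv.swap 0 i')).trans (Equiv.sumComm _ _), by
      rintro (_ | _) (_ | _) <;> simp [K33]⟩, by simp, by simp⟩

theorem K33.exists_iso_apply_inl (w : Fin 3 ⊕ Fin 3) : ∃ ρ : K33 ≃g K33, ρ (.inl 0) = w := by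
  obtain ⟨w', hw'⟩ : ∃ w', K33.Adj w w' := by revert w; decide
  obtain ⟨ρ, hρ, -⟩ := K33.exists_iso_apply_inl_inr hw'
  exact ⟨ρ, hρ⟩

theorem K33.ncard_neighborSet (w : Fin 3 ⊕ Fin 3) : (K33.neighborSet w).ncard = 3 := by
  rw [← Nat.card_coe_set_eq, Nat.card_eq_fintype_card, card_neighborSet_eq_degree]
  revert w
  decide

theorem Egraph_connected : Egraph.Connected := by
  rw [connected_iff]
  exact ⟨by decide, ⟨.inr ()⟩⟩

theorem E'graph_connected : E'graph.Connected := by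
  rw [connected_iff]
  exact ⟨by decide, ⟨.inr ()⟩⟩

theorem Egraph_ncard_edgeSet : Egraph.edgeSet.ncard = 10 := by
  rw [← coe_edgeFinset, Set.ncard_coe_finset]
  decide

theorem E'graph_ncard_edgeSet : E'graph.edgeSet.ncard = 10 := by
  rw [← coe_edgeFinset, Set.ncard_coe_finset]
  decide

theorem Egraph_degree_ne_one (v : (Fin 3 ⊕ Fin 3) ⊕ Unit) : Egraph.degree v ≠ 1 := by
  revert v
  decide

theorem E'graph_degree_inr : E'graph.degree (.inr ()) = 1 := by decide

section Classification

variable {V : Type} {G : SimpleGraph V}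

theorem exists_injective_hom_E'graph (σ : K33 →g G) (hσ : Injective σ) {w : Fin 3 ⊕ Fin 3}
    {x : V} (hx : x ∉ Set.range σ) (hwx : G.Adj (σ w) x) :
    ∃ f : E'graph →g G, Injective f := by
  obtain ⟨ρ, rfl⟩ := K33.exists_iso_apply_inl w
  exact exists_injective_hom_attachPendant (σ.comp ρ.toHom) (hσ.comp ρ.injective)
    (fun ⟨a, ha⟩ => hx ⟨ρ a, ha⟩) hwx

theorem exists_injective_hom_Egraph {σ : Fin 3 ⊕ Fin 3 → V} (hσ : Injective σ)
    {w₁ w₂ : Fin 3 ⊕ Fin 3} (hw : K33.Adj w₁ w₂)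
    (hadj : ∀ a b, K33.Adj a b → s(a, b) ≠ s(w₁, w₂) → G.Adj (σ a) (σ b)) {x : V}
    (hx : x ∉ Set.range σ) (h₁ : G.Adj (σ w₁) x) (h₂ : G.Adj x (σ w₂)) :
    ∃ f : Egraph →g G, Injective f := by
  obtain ⟨ρ, rfl, rfl⟩ := K33.exists_iso_apply_inl_inr hw
  refine exists_injective_hom_subdivide (hσ.comp ρ.injective) (fun a b hab hne => ?_)
    (fun ⟨a, ha⟩ => hx ⟨ρ a, ha⟩) h₁ h₂
  refine hadj _ _ (ρ.map_adj_iff.mpr hab) fun he => hne (Sym2.map.injective ρ.injective ?_)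
  simpa only [Sym2.map_mk] using he

theorem exists_injective_hom_E'graph_of_card_eq_seven [Fintype V] (hcard : Fintype.card V = 7)
    (hconn : G.Connected) (σ : K33 →g G) (hσ : Injective σ) :
    ∃ f : E'graph →g G, Injective f := by
  have hcompl : (Set.range σ)ᶜ.ncard = 1 := by
    rw [Set.ncard_compl, Set.ncard_range_of_injective hσ, Nat.card_eq_fintype_card, hcard]
    simp
  obtain ⟨x, hx⟩ := Set.ncard_eq_one.mp hcompl
  have hxσ : x ∉ Set.range σ := by
    rw [← Set.mem_compl_iff, hx]
    rfl
  have : Nontrivial V := Fintype.one_lt_card_iff_nontrivial.mp (by omega)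
  obtain ⟨y, hxy⟩ := hconn.preconnected.exists_adj_of_nontrivial x
  obtain ⟨w, rfl⟩ : y ∈ Set.range σ := by
    by_contra hy
    have hyx : y = x := by simpa [hx] using Set.mem_compl hy
    exact G.irrefl (hyx ▸ hxy)
  exact exists_injective_hom_E'graph σ hσ hxσ hxy.symm

theorem exists_injective_hom_of_split_vertex {σ : Fin 3 ⊕ Fin 3 → V} (hσ : Injective σ)
    {w : Fin 3 ⊕ Fin 3} {x : V} (hx : x ∉ Set.range σ) (hwx : G.Adj (σ w) x)
    (hoff : ∀ p q, K33.Adj p q → p ≠ w → q ≠ w → G.Adj (σ p) (σ q))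
    (hstar : ∀ q, K33.Adj w q → G.Adj (σ w) (σ q) ∨ G.Adj x (σ q))
    (hmiss : {q ∈ K33.neighborSet w | ¬G.Adj (σ w) (σ q)}.Subsingleton) :
    (∃ f : Egraph →g G, Injective f) ∨ ∃ f : E'graph →g G, Injective f := by
  have hadj : ∀ p q, K33.Adj p q → (p = w → G.Adj (σ w) (σ q)) →
      (q = w → G.Adj (σ w) (σ p)) → G.Adj (σ p) (σ q) := by
    intro p q hpq hp hq
    by_cases hpw : p = w
    · exact hpw ▸ hp hpw
    by_cases hqw : q = w
    · exact (hqw ▸ hq hqw).symm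
    exact hoff p q hpq hpw hqw
  by_cases hall : ∀ q, K33.Adj w q → G.Adj (σ w) (σ q)
  · refine .inr (exists_injective_hom_E'graph ⟨σ, fun {p q} hpq => hadj p q hpq ?_ ?_⟩ hσ hx hwx)
    · rintro rfl
      exact hall q hpq
    · rintro rfl
      exact hall p hpq.symm
  · obtain ⟨q₀, hq₀, hmiss₀⟩ := not_forall₂.mp hall
    refine .inl (exists_injective_hom_Egraph hσ hq₀ (fun p q hpq hne => hadj p q hpq ?_ ?_) hx hwx
      ((hstar q₀ hq₀).resolve_left hmiss₀))
    · rintro rfl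
      by_contra h
      exact hne (by rw [hmiss ⟨hpq, h⟩ ⟨hq₀, hmiss₀⟩])
    · rintro rfl
      by_contra h
      exact hne (by rw [Sym2.eq_swap, hmiss ⟨hpq.symm, h⟩ ⟨hq₀, hmiss₀⟩])

theorem exists_injective_hom_of_branch_pair {B : Fin 3 ⊕ Fin 3 → Set V}
    (hdisj : Pairwise (Disjoint on B))
    (hadj : ∀ w₁ w₂, K33.Adj w₁ w₂ → ∃ u ∈ B w₁, ∃ x ∈ B w₂, G.Adj u x)
    {w : Fin 3 ⊕ Fin 3} {c c' : V} (hBw : B w = {c, c'}) (hcc' : G.Adj c c')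
    {σ : Fin 3 ⊕ Fin 3 → V} (hσB : ∀ p ≠ w, B p = {σ p})
    (hstar : ∀ q, K33.Adj w q → G.Adj c (σ q) ∨ G.Adj c' (σ q))
    (hmiss : {q ∈ K33.neighborSet w | ¬G.Adj c (σ q)}.Subsingleton) :
    (∃ f : Egraph →g G, Injective f) ∨ ∃ f : E'graph →g G, Injective f := by
  classical
  have hupdate : ∀ p ≠ w, update σ w c p = σ p := fun p hp => update_of_ne hp _ _
  have hmem : ∀ p, update σ w c p ∈ B p := fun p => by
    by_cases hp : p = w
    · subst hp
      simp [hBw]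
    · simp [hupdate p hp, hσB p hp]
  refine exists_injective_hom_of_split_vertex (injective_of_mem_of_pairwise_disjoint hdisj hmem)
    (x := c') ?_ (by simpa using hcc') (fun p q hpq hp hq => ?_) (fun q hq => ?_)
    (hmiss.anti fun q ⟨hq, h⟩ => ⟨hq, ?_⟩)
  · rintro ⟨p, hp⟩
    obtain rfl : p = w := eq_of_mem_of_pairwise_disjoint hdisj (hp ▸ hmem p) (by simp [hBw])
    exact hcc'.ne (by simpa using hp)
  · rw [hupdate p hp, hupdate q hq]
    exact adj_of_branchSets_eq_singleton hadj hpq (hσB p hp) (hσB q hq)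
  · rw [update_self, hupdate q hq.ne']
    exact hstar q hq
  · rwa [update_self, hupdate q (K33.ne_of_adj hq).symm] at h

theorem exists_injective_hom_of_isMinor_K33 [Fintype V] (hcard : Fintype.card V = 7)
    (hconn : G.Connected) (hminor : IsMinor K33 G) :
    (∃ f : Egraph →g G, Injective f) ∨ ∃ f : E'graph →g G, Injective f := by
  obtain ⟨B, hne, hconnB, hdisj, hadj⟩ := hminor
  replace hdisj : Pairwise (Disjoint on B) := fun p q h => hdisj p q h
  choose σ hσB using hne
  have hsingle : ∀ p, (B p).ncard = 1 → B p = {σ p} := fun p hp => by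
    obtain ⟨a, ha⟩ := Set.ncard_eq_one.mp hp
    have hσa : σ p = a := by simpa [ha] using hσB p
    rw [ha, hσa]
  have hsizes := Fintype.forall_eq_one_or_exists_eq_two_of_sum_le
    (fun p => (Set.ncard_pos (Set.toFinite _)).mpr ⟨_, hσB p⟩)
    ((sum_ncard_le_of_pairwise_disjoint hdisj).trans (by simp [Nat.card_eq_fintype_card, hcard]))
  rcases hsizes with hone | ⟨w, hw, hone⟩
  · refine .inr (exists_injective_hom_E'graph_of_card_eq_seven hcard hconn
      ⟨σ, fun hpq => ?_⟩ (injective_of_mem_of_pairwise_disjoint hdisj hσB))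
    exact adj_of_branchSets_eq_singleton hadj hpq (hsingle _ (hone _)) (hsingle _ (hone _))
  obtain ⟨u, u', huu', hBw⟩ := Set.ncard_eq_two.mp hw
  have hσB' : ∀ p ≠ w, B p = {σ p} := fun p hp => hsingle p (hone p hp)
  have huu'adj : G.Adj u u' := adj_of_connected_induce_pair huu' (hBw ▸ hconnB w)
  have hstar : ∀ q, K33.Adj w q → G.Adj u (σ q) ∨ G.Adj u' (σ q) := by
    intro q hq
    obtain ⟨a, ha, b, hb, hab⟩ := hadj w q hq
    rw [hσB' q hq.ne', Set.mem_singleton_iff] at hb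
    rw [hBw] at ha
    subst hb
    rcases ha with rfl | rfl
    exacts [.inl hab, .inr hab]
  rcases Set.subsingleton_or_subsingleton_of_ncard_le_three (K33.ncard_neighborSet w).le hstar
    with h | h
  · exact exists_injective_hom_of_branch_pair hdisj hadj hBw huu'adj hσB' hstar h
  · exact exists_injective_hom_of_branch_pair hdisj hadj (hBw.trans (Set.pair_comm u u'))
      huu'adj.symm hσB' (fun q hq => (hstar q hq).symm) h

end Classification

/-- Up to isomorphism, there are exactly two connected simple graphs with 7 vertices and
10 edges that have `K₃,₃` as a minor: the graph `E` obtained from `K₃,₃` by subdividing one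
edge once, and the graph `E′` obtained from `K₃,₃` by attaching one pendant vertex. -/
theorem two_graphs_with_7_vertices_10_edges_K33_minor :
    IsEmpty (Egraph ≃g E'graph) ∧
    (Egraph.Connected ∧ Egraph.edgeSet.ncard = 10 ∧ IsMinor K33 Egraph) ∧
    (E'graph.Connected ∧ E'graph.edgeSet.ncard = 10 ∧ IsMinor K33 E'graph) ∧
    (∀ (V : Type) [Fintype V], Fintype.card V = 7 →
      ∀ G : SimpleGraph V, G.Connected → G.edgeSet.ncard = 10 → IsMinor K33 G →
        Nonempty (G ≃g Egraph) ∨ Nonempty (G ≃g E'graph)) := by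
  refine ⟨⟨fun φ => Egraph_degree_ne_one _ ((φ.symm.degree_eq _).trans E'graph_degree_inr)⟩,
    ⟨Egraph_connected, Egraph_ncard_edgeSet, isMinor_subdivide K33 _ _⟩,
    ⟨E'graph_connected, E'graph_ncard_edgeSet, isMinor_attachPendant K33 _⟩, ?_⟩
  intro V _ hcard G hconn hedges hminor
  have hV : Nat.card V ≤ Nat.card ((Fin 3 ⊕ Fin 3) ⊕ Unit) := by
    simp [Nat.card_eq_fintype_card, hcard]
  rcases exists_injective_hom_of_isMinor_K33 hcard hconn hminor with ⟨f, hf⟩ | ⟨f, hf⟩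
  · exact .inl ((f.nonempty_iso_of_injective hf hV
      (by rw [hedges, Egraph_ncard_edgeSet])).map RelIso.symm)
  · exact .inr ((f.nonempty_iso_of_injective hf hV
      (by rw [hedges, E'graph_ncard_edgeSet])).map RelIso.symm)
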